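/- arXiv:2412.05165 — 2 statements merged into one kernel-verified Lean document; each statement's English description precedes it below -/
import Mathlib

section
/- Define $\mathscr{F}(t_1,t_2,\alpha,\beta) = \tfrac12 t_1^2 t_2 + e^{t_2} + \tfrac12\alpha^2\log\alpha + \tfrac12\alpha^2\beta + \alpha e^{\beta} - \alpha e^{t_2-\beta} + t_1\alpha\beta$ on the domain $\alpha\neq 0$. Then $\mathscr{F}$ satisfies: (i) $\partial_{t_1}$ is a unity for the multiplication defined by $c_{abc} = \partial_a\partial_b\partial_c\mathscr{F}$ and the metric $\eta_{ab} = \partial_{t_1}\partial_a\partial_b\mathscr{F}$; in particular $\eta$ in the coordinates $(t_1,t_2,\alpha,\beta)$ is the constant matrix with $\eta_{t_1 t_2}=1$, $\eta_{\alpha\beta}=1$ and all other independent entries zero; (ii) the WDVV associativity equations hold for $\mathscr{F}$. -/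
open Complex

/-- Partial derivative in the `i`-th coordinate direction of a function of `Fin 4 → ℂ`. -/
noncomputable def pd (i : Fin 4) (G : (Fin 4 → ℂ) → ℂ) : (Fin 4 → ℂ) → ℂ :=
  fun x => deriv (fun s => G (Function.update x i s)) (x i)

/-- The prepotential `𝓕(t₁,t₂,α,β) = ½t₁²t₂ + e^{t₂} + ½α²log α + ½α²β + αe^β
- αe^{t₂-β} + t₁αβ`, with coordinates `x 0 = t₁`, `x 1 = t₂`, `x 2 = α`, `x 3 = β`. -/
noncomputable def Fpre (x : Fin 4 → ℂ) : ℂ :=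
  x 0 ^ 2 * x 1 / 2 + Complex.exp (x 1) + x 2 ^ 2 * Complex.log (x 2) / 2 +
    x 2 ^ 2 * x 3 / 2 + x 2 * Complex.exp (x 3) - x 2 * Complex.exp (x 1 - x 3) +
    x 0 * x 2 * x 3

/-- The constant metric `η` with `η_{t₁t₂} = η_{t₂t₁} = 1`, `η_{αβ} = η_{βα} = 1`. -/
noncomputable def etaMat : Matrix (Fin 4) (Fin 4) ℂ :=
  !![0, 1, 0, 0; 1, 0, 0, 0; 0, 0, 0, 1; 0, 0, 1, 0]

noncomputable section
def z4 : (Fin 4 → ℂ) → ℂ := fun _ => 0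
def o4 : (Fin 4 → ℂ) → ℂ := fun _ => 1
def P (j : Fin 4) : (Fin 4 → ℂ) → ℂ := fun x => x j
def G0f : (Fin 4 → ℂ) → ℂ := fun x => x 0 * x 1 + x 2 * x 3
def G1f : (Fin 4 → ℂ) → ℂ := fun x => x 0 ^ 2 / 2 + Complex.exp (x 1) - x 2 * Complex.exp (x 1 - x 3)
def G2f : (Fin 4 → ℂ) → ℂ := fun x =>
  x 2 * Complex.log (x 2) + x 2 / 2 + x 2 * x 3 + Complex.exp (x 3) - Complex.exp (x 1 - x 3) + x 0 * x 3
def G3f : (Fin 4 → ℂ) → ℂ := fun x =>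
  x 2 ^ 2 / 2 + x 2 * Complex.exp (x 3) + x 2 * Complex.exp (x 1 - x 3) + x 0 * x 2
def h11 : (Fin 4 → ℂ) → ℂ := fun x => Complex.exp (x 1) - x 2 * Complex.exp (x 1 - x 3)
def h12 : (Fin 4 → ℂ) → ℂ := fun x => -Complex.exp (x 1 - x 3)
def h13 : (Fin 4 → ℂ) → ℂ := fun x => x 2 * Complex.exp (x 1 - x 3)
def h22 : (Fin 4 → ℂ) → ℂ := fun x => Complex.log (x 2) + 3 / 2 + x 3
def h23 : (Fin 4 → ℂ) → ℂ := fun x => x 0 + x 2 + Complex.exp (x 3) + Complex.exp (x 1 - x 3)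
def h33 : (Fin 4 → ℂ) → ℂ := fun x => x 2 * Complex.exp (x 3) - x 2 * Complex.exp (x 1 - x 3)
def t111 : (Fin 4 → ℂ) → ℂ := h11
def t112 : (Fin 4 → ℂ) → ℂ := h12
def t113 : (Fin 4 → ℂ) → ℂ := h13
def t123 : (Fin 4 → ℂ) → ℂ := fun x => Complex.exp (x 1 - x 3)
def t133 : (Fin 4 → ℂ) → ℂ := fun x => -(x 2 * Complex.exp (x 1 - x 3))
def t222 : (Fin 4 → ℂ) → ℂ := fun x => (x 2)⁻¹
def t233 : (Fin 4 → ℂ) → ℂ := fun x => Complex.exp (x 3) - Complex.exp (x 1 - x 3)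
def t333 : (Fin 4 → ℂ) → ℂ := fun x => x 2 * Complex.exp (x 3) + x 2 * Complex.exp (x 1 - x 3)

def Gd : Fin 4 → (Fin 4 → ℂ) → ℂ
  | 0 => G0f
  | 1 => G1f
  | 2 => G2f
  | 3 => G3f

def Hd : Fin 4 → Fin 4 → (Fin 4 → ℂ) → ℂ
  | 0, 0 => P 1
  | 0, 1 => P 0
  | 0, 2 => P 3
  | 0, 3 => P 2
  | 1, 0 => P 0
  | 1, 1 => h11
  | 1, 2 => h12
  | 1, 3 => h13
  | 2, 0 => P 3
  | 2, 1 => h12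
  | 2, 2 => h22
  | 2, 3 => h23
  | 3, 0 => P 2
  | 3, 1 => h13
  | 3, 2 => h23
  | 3, 3 => h33
noncomputable def Td : Fin 4 → Fin 4 → Fin 4 → (Fin 4 → ℂ) → ℂ
  | 0, 0, 0 => z4
  | 0, 0, 1 => o4
  | 0, 0, 2 => z4
  | 0, 0, 3 => z4
  | 0, 1, 0 => o4
  | 0, 1, 1 => z4
  | 0, 1, 2 => z4
  | 0, 1, 3 => z4
  | 0, 2, 0 => z4
  | 0, 2, 1 => z4
  | 0, 2, 2 => z4
  | 0, 2, 3 => o4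
  | 0, 3, 0 => z4
  | 0, 3, 1 => z4
  | 0, 3, 2 => o4
  | 0, 3, 3 => z4
  | 1, 0, 0 => o4
  | 1, 0, 1 => z4
  | 1, 0, 2 => z4
  | 1, 0, 3 => z4
  | 1, 1, 0 => z4
  | 1, 1, 1 => t111
  | 1, 1, 2 => t112
  | 1, 1, 3 => t113
  | 1, 2, 0 => z4
  | 1, 2, 1 => t112
  | 1, 2, 2 => z4
  | 1, 2, 3 => t123
  | 1, 3, 0 => z4
  | 1, 3, 1 => t113
  | 1, 3, 2 => t123
  | 1, 3, 3 => t133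
  | 2, 0, 0 => z4
  | 2, 0, 1 => z4
  | 2, 0, 2 => z4
  | 2, 0, 3 => o4
  | 2, 1, 0 => z4
  | 2, 1, 1 => t112
  | 2, 1, 2 => z4
  | 2, 1, 3 => t123
  | 2, 2, 0 => z4
  | 2, 2, 1 => z4
  | 2, 2, 2 => t222
  | 2, 2, 3 => o4
  | 2, 3, 0 => o4
  | 2, 3, 1 => t123
  | 2, 3, 2 => o4
  | 2, 3, 3 => t233
  | 3, 0, 0 => z4
  | 3, 0, 1 => z4
  | 3, 0, 2 => o4
  | 3, 0, 3 => z4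
  | 3, 1, 0 => z4
  | 3, 1, 1 => t113
  | 3, 1, 2 => t123
  | 3, 1, 3 => t133
  | 3, 2, 0 => o4
  | 3, 2, 1 => t123
  | 3, 2, 2 => o4
  | 3, 2, 3 => t233
  | 3, 3, 0 => z4
  | 3, 3, 1 => t133
  | 3, 3, 2 => t233
  | 3, 3, 3 => t333
end

lemma etaInv : etaMat⁻¹ = etaMat := by
  have h : etaMat * etaMat = 1 := by
    ext i j
    fin_cases i <;> fin_cases j <;>
      simp [etaMat, Matrix.mul_apply, Fin.sum_univ_four, Matrix.one_apply,
        Matrix.vecHead, Matrix.vecTail]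
  exact Matrix.inv_eq_right_inv h

lemma pd_congr (i : Fin 4) {Pf Q : (Fin 4 → ℂ) → ℂ}
    (h : ∀ y, y 2 ∈ slitPlane → Pf y = Q y) {x : Fin 4 → ℂ} (hx : x 2 ∈ slitPlane) :
    pd i Pf x = pd i Q x := by
  unfold pd
  apply Filter.EventuallyEq.deriv_eq
  have hev : ∀ᶠ s in nhds (x i), (Function.update x i s) 2 ∈ slitPlane := by
    by_cases hi : i = 2
    · subst hi
      exact (Complex.isOpen_slitPlane.eventually_mem hx).mono fun s hs => by simpa using hs
    · exact Filter.Eventually.of_forall fun s => by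
        rwa [Function.update_of_ne (fun h2 => hi h2.symm)]
  exact hev.mono fun s hs => h _ hs

lemma pd_P (i j : Fin 4) (y : Fin 4 → ℂ) : pd i (P j) y = if j = i then 1 else 0 := by
  unfold pd P
  rcases eq_or_ne j i with h | h
  · subst h
    rw [show (fun s : ℂ => Function.update y j s j) = fun s => s from
      funext fun s => Function.update_self .., if_pos rfl]
    simpa using deriv_id (y j)
  · rw [show (fun s : ℂ => Function.update y i s j) = fun _ => y j from
      funext fun s => Function.update_of_ne h _ _, if_neg h]
    exact deriv_const _ _

lemma pdF0 (y : Fin 4 → ℂ) : pd 0 Fpre y = G0f y := by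
  unfold pd
  rw [show (fun s => Fpre (Function.update y 0 s)) = (fun s : ℂ =>
      s ^ 2 * y 1 / 2 + Complex.exp (y 1) + y 2 ^ 2 * Complex.log (y 2) / 2 +
      y 2 ^ 2 * y 3 / 2 + y 2 * Complex.exp (y 3) - y 2 * Complex.exp (y 1 - y 3) +
      s * y 2 * y 3) from funext fun s => by simp [Fpre, Function.update]]
  have h := ((((((hasDerivAt_pow 2 (y 0)).mul_const (y 1)).div_const 2).add_const
      (Complex.exp (y 1))).add_const (y 2 ^ 2 * Complex.log (y 2) / 2)).add_const
      (y 2 ^ 2 * y 3 / 2)).add_const (y 2 * Complex.exp (y 3)) |>.sub_const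
      (y 2 * Complex.exp (y 1 - y 3)) |>.add
      (((hasDerivAt_id (y 0)).mul_const (y 2)).mul_const (y 3))
  simp only [id_eq] at h
  erw [h.deriv]
  simp only [G0f]
  ring

lemma pdF1 (y : Fin 4 → ℂ) : pd 1 Fpre y = G1f y := by
  unfold pd
  rw [show (fun s => Fpre (Function.update y 1 s)) = (fun s : ℂ =>
      y 0 ^ 2 * s / 2 + Complex.exp s + y 2 ^ 2 * Complex.log (y 2) / 2 +
      y 2 ^ 2 * y 3 / 2 + y 2 * Complex.exp (y 3) - y 2 * Complex.exp (s - y 3) +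
      y 0 * y 2 * y 3) from funext fun s => by simp [Fpre, Function.update]]
  have h := (((((((hasDerivAt_id (y 1)).const_mul (y 0 ^ 2)).div_const 2).add
      (Complex.hasDerivAt_exp (y 1))).add_const (y 2 ^ 2 * Complex.log (y 2) / 2)).add_const
      (y 2 ^ 2 * y 3 / 2)).add_const (y 2 * Complex.exp (y 3))).sub
      ((((hasDerivAt_id (y 1)).sub_const (y 3)).cexp).const_mul (y 2)) |>.add_const
      (y 0 * y 2 * y 3)
  simp only [id_eq] at h
  erw [h.deriv]
  simp only [G1f]
  ring

lemma pdF2 (y : Fin 4 → ℂ) (hy : y 2 ∈ slitPlane) : pd 2 Fpre y = G2f y := by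
  unfold pd
  rw [show (fun s => Fpre (Function.update y 2 s)) = (fun s : ℂ =>
      y 0 ^ 2 * y 1 / 2 + Complex.exp (y 1) + s ^ 2 * Complex.log s / 2 +
      s ^ 2 * y 3 / 2 + s * Complex.exp (y 3) - s * Complex.exp (y 1 - y 3) +
      y 0 * s * y 3) from funext fun s => by simp [Fpre, Function.update]]
  have h := (((((((hasDerivAt_pow 2 (y 2)).mul (Complex.hasDerivAt_log hy)).div_const 2).const_add
      (y 0 ^ 2 * y 1 / 2 + Complex.exp (y 1))).add
      (((hasDerivAt_pow 2 (y 2)).mul_const (y 3)).div_const 2)).add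
      ((hasDerivAt_id (y 2)).mul_const (Complex.exp (y 3)))).sub
      ((hasDerivAt_id (y 2)).mul_const (Complex.exp (y 1 - y 3)))).add
      (((hasDerivAt_id (y 2)).const_mul (y 0)).mul_const (y 3))
  simp only [id_eq] at h
  erw [h.deriv]
  simp only [G2f]
  field_simp [Complex.slitPlane_ne_zero hy]
  ring

lemma pdF3 (y : Fin 4 → ℂ) : pd 3 Fpre y = G3f y := by
  unfold pd
  rw [show (fun s => Fpre (Function.update y 3 s)) = (fun s : ℂ =>
      y 0 ^ 2 * y 1 / 2 + Complex.exp (y 1) + y 2 ^ 2 * Complex.log (y 2) / 2 +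
      y 2 ^ 2 * s / 2 + y 2 * Complex.exp s - y 2 * Complex.exp (y 1 - s) +
      y 0 * y 2 * s) from funext fun s => by simp [Fpre, Function.update]]
  have h := (((((hasDerivAt_id (y 3)).const_mul (y 2 ^ 2)).div_const 2).const_add
      (y 0 ^ 2 * y 1 / 2 + Complex.exp (y 1) + y 2 ^ 2 * Complex.log (y 2) / 2)).add
      ((Complex.hasDerivAt_exp (y 3)).const_mul (y 2))).sub
      ((((hasDerivAt_id (y 3)).const_sub (y 1)).cexp).const_mul (y 2)) |>.add
      ((hasDerivAt_id (y 3)).const_mul (y 0 * y 2))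
  simp only [id_eq] at h
  erw [h.deriv]
  simp only [G3f]
  ring

lemma key1 (y : Fin 4 → ℂ) (hy : y 2 ∈ slitPlane) (e : Fin 4) : pd e Fpre y = Gd e y := by
  fin_cases e
  · exact pdF0 y
  · exact pdF1 y
  · exact pdF2 y hy
  · exact pdF3 y
lemma pdG0_0 (y : Fin 4 → ℂ) : pd 0 G0f y = P 1 y := by
  unfold pd
  rw [show (fun s => G0f (Function.update y 0 s)) = (fun s : ℂ => s * y 1 + y 2 * y 3) from
    funext fun s => by simp [G0f, Function.update]]
  have h := ((hasDerivAt_id (y 0)).mul_const (y 1)).add_const (y 2 * y 3)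
  simp only [id_eq] at h
  rw [h.deriv]
  simp only [P]
  ring

lemma pdG0_1 (y : Fin 4 → ℂ) : pd 1 G0f y = P 0 y := by
  unfold pd
  rw [show (fun s => G0f (Function.update y 1 s)) = (fun s : ℂ => y 0 * s + y 2 * y 3) from
    funext fun s => by simp [G0f, Function.update]]
  have h := ((hasDerivAt_id (y 1)).const_mul (y 0)).add_const (y 2 * y 3)
  simp only [id_eq] at h
  rw [h.deriv]
  simp only [P]
  ring

lemma pdG0_2 (y : Fin 4 → ℂ) : pd 2 G0f y = P 3 y := by
  unfold pd
  rw [show (fun s => G0f (Function.update y 2 s)) = (fun s : ℂ => y 0 * y 1 + s * y 3) from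
    funext fun s => by simp [G0f, Function.update]]
  have h := ((hasDerivAt_id (y 2)).mul_const (y 3)).const_add (y 0 * y 1)
  simp only [id_eq] at h
  rw [h.deriv]
  simp only [P]
  ring

lemma pdG0_3 (y : Fin 4 → ℂ) : pd 3 G0f y = P 2 y := by
  unfold pd
  rw [show (fun s => G0f (Function.update y 3 s)) = (fun s : ℂ => y 0 * y 1 + y 2 * s) from
    funext fun s => by simp [G0f, Function.update]]
  have h := ((hasDerivAt_id (y 3)).const_mul (y 2)).const_add (y 0 * y 1)
  simp only [id_eq] at h
  rw [h.deriv]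
  simp only [P]
  ring

lemma pdG1_0 (y : Fin 4 → ℂ) : pd 0 G1f y = P 0 y := by
  unfold pd
  rw [show (fun s => G1f (Function.update y 0 s)) = (fun s : ℂ => s ^ 2 / 2 + Complex.exp (y 1) - y 2 * Complex.exp (y 1 - y 3)) from
    funext fun s => by simp [G1f, Function.update]]
  have h := (((hasDerivAt_pow 2 (y 0)).div_const 2).add_const (Complex.exp (y 1))).sub_const (y 2 * Complex.exp (y 1 - y 3))
  rw [h.deriv]
  simp only [P]
  ring

lemma pdG1_1 (y : Fin 4 → ℂ) : pd 1 G1f y = h11 y := by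
  unfold pd
  rw [show (fun s => G1f (Function.update y 1 s)) = (fun s : ℂ => y 0 ^ 2 / 2 + Complex.exp s - y 2 * Complex.exp (s - y 3)) from
    funext fun s => by simp [G1f, Function.update]]
  have h := ((Complex.hasDerivAt_exp (y 1)).const_add (y 0 ^ 2 / 2)).sub ((((hasDerivAt_id (y 1)).sub_const (y 3)).cexp).const_mul (y 2))
  simp only [id_eq] at h
  erw [h.deriv]
  simp only [h11]
  ring

lemma pdG1_2 (y : Fin 4 → ℂ) : pd 2 G1f y = h12 y := by
  unfold pd
  rw [show (fun s => G1f (Function.update y 2 s)) = (fun s : ℂ => y 0 ^ 2 / 2 + Complex.exp (y 1) - s * Complex.exp (y 1 - y 3)) from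
    funext fun s => by simp [G1f, Function.update]]
  have h := ((hasDerivAt_id (y 2)).mul_const (Complex.exp (y 1 - y 3))).const_sub (y 0 ^ 2 / 2 + Complex.exp (y 1))
  simp only [id_eq] at h
  rw [h.deriv]
  simp only [h12]
  ring

lemma pdG1_3 (y : Fin 4 → ℂ) : pd 3 G1f y = h13 y := by
  unfold pd
  rw [show (fun s => G1f (Function.update y 3 s)) = (fun s : ℂ => y 0 ^ 2 / 2 + Complex.exp (y 1) - y 2 * Complex.exp (y 1 - s)) from
    funext fun s => by simp [G1f, Function.update]]
  have h := ((((hasDerivAt_id (y 3)).const_sub (y 1)).cexp).const_mul (y 2)).const_sub (y 0 ^ 2 / 2 + Complex.exp (y 1))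
  simp only [id_eq] at h
  rw [h.deriv]
  simp only [h13]
  ring

lemma pdG2_0 (y : Fin 4 → ℂ) : pd 0 G2f y = P 3 y := by
  unfold pd
  rw [show (fun s => G2f (Function.update y 0 s)) = (fun s : ℂ => y 2 * Complex.log (y 2) + y 2 / 2 + y 2 * y 3 + Complex.exp (y 3) - Complex.exp (y 1 - y 3) + s * y 3) from
    funext fun s => by simp [G2f, Function.update]]
  have h := ((hasDerivAt_id (y 0)).mul_const (y 3)).const_add (y 2 * Complex.log (y 2) + y 2 / 2 + y 2 * y 3 + Complex.exp (y 3) - Complex.exp (y 1 - y 3))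
  simp only [id_eq] at h
  rw [h.deriv]
  simp only [P]
  ring

lemma pdG2_1 (y : Fin 4 → ℂ) : pd 1 G2f y = h12 y := by
  unfold pd
  rw [show (fun s => G2f (Function.update y 1 s)) = (fun s : ℂ => y 2 * Complex.log (y 2) + y 2 / 2 + y 2 * y 3 + Complex.exp (y 3) - Complex.exp (s - y 3) + y 0 * y 3) from
    funext fun s => by simp [G2f, Function.update]]
  have h := ((((hasDerivAt_id (y 1)).sub_const (y 3)).cexp).const_sub (y 2 * Complex.log (y 2) + y 2 / 2 + y 2 * y 3 + Complex.exp (y 3))).add_const (y 0 * y 3)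
  simp only [id_eq] at h
  rw [h.deriv]
  simp only [h12]
  ring

lemma pdG2_2 (y : Fin 4 → ℂ) (hy : y 2 ∈ slitPlane) : pd 2 G2f y = h22 y := by
  unfold pd
  rw [show (fun s => G2f (Function.update y 2 s)) = (fun s : ℂ => s * Complex.log s + s / 2 + s * y 3 + Complex.exp (y 3) - Complex.exp (y 1 - y 3) + y 0 * y 3) from
    funext fun s => by simp [G2f, Function.update]]
  have h := ((((((hasDerivAt_id (y 2)).mul (Complex.hasDerivAt_log hy)).add ((hasDerivAt_id (y 2)).div_const 2)).add ((hasDerivAt_id (y 2)).mul_const (y 3))).add_const (Complex.exp (y 3))).sub_const (Complex.exp (y 1 - y 3))).add_const (y 0 * y 3)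
  simp only [id_eq] at h
  erw [h.deriv]
  simp only [h22]
  field_simp [Complex.slitPlane_ne_zero hy]
  ring

lemma pdG2_3 (y : Fin 4 → ℂ) : pd 3 G2f y = h23 y := by
  unfold pd
  rw [show (fun s => G2f (Function.update y 3 s)) = (fun s : ℂ => y 2 * Complex.log (y 2) + y 2 / 2 + y 2 * s + Complex.exp s - Complex.exp (y 1 - s) + y 0 * s) from
    funext fun s => by simp [G2f, Function.update]]
  have h := (((((hasDerivAt_id (y 3)).const_mul (y 2)).const_add (y 2 * Complex.log (y 2) + y 2 / 2)).add (Complex.hasDerivAt_exp (y 3))).sub (((hasDerivAt_id (y 3)).const_sub (y 1)).cexp)).add ((hasDerivAt_id (y 3)).const_mul (y 0))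
  simp only [id_eq] at h
  erw [h.deriv]
  simp only [h23]
  ring

lemma pdG3_0 (y : Fin 4 → ℂ) : pd 0 G3f y = P 2 y := by
  unfold pd
  rw [show (fun s => G3f (Function.update y 0 s)) = (fun s : ℂ => y 2 ^ 2 / 2 + y 2 * Complex.exp (y 3) + y 2 * Complex.exp (y 1 - y 3) + s * y 2) from
    funext fun s => by simp [G3f, Function.update]]
  have h := ((hasDerivAt_id (y 0)).mul_const (y 2)).const_add (y 2 ^ 2 / 2 + y 2 * Complex.exp (y 3) + y 2 * Complex.exp (y 1 - y 3))
  simp only [id_eq] at h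
  rw [h.deriv]
  simp only [P]
  ring

lemma pdG3_1 (y : Fin 4 → ℂ) : pd 1 G3f y = h13 y := by
  unfold pd
  rw [show (fun s => G3f (Function.update y 1 s)) = (fun s : ℂ => y 2 ^ 2 / 2 + y 2 * Complex.exp (y 3) + y 2 * Complex.exp (s - y 3) + y 0 * y 2) from
    funext fun s => by simp [G3f, Function.update]]
  have h := (((((hasDerivAt_id (y 1)).sub_const (y 3)).cexp).const_mul (y 2)).const_add (y 2 ^ 2 / 2 + y 2 * Complex.exp (y 3))).add_const (y 0 * y 2)
  simp only [id_eq] at h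
  rw [h.deriv]
  simp only [h13]
  ring

lemma pdG3_2 (y : Fin 4 → ℂ) : pd 2 G3f y = h23 y := by
  unfold pd
  rw [show (fun s => G3f (Function.update y 2 s)) = (fun s : ℂ => s ^ 2 / 2 + s * Complex.exp (y 3) + s * Complex.exp (y 1 - y 3) + y 0 * s) from
    funext fun s => by simp [G3f, Function.update]]
  have h := ((((hasDerivAt_pow 2 (y 2)).div_const 2).add ((hasDerivAt_id (y 2)).mul_const (Complex.exp (y 3)))).add ((hasDerivAt_id (y 2)).mul_const (Complex.exp (y 1 - y 3)))).add ((hasDerivAt_id (y 2)).const_mul (y 0))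
  simp only [id_eq] at h
  erw [h.deriv]
  simp only [h23]
  ring

lemma pdG3_3 (y : Fin 4 → ℂ) : pd 3 G3f y = h33 y := by
  unfold pd
  rw [show (fun s => G3f (Function.update y 3 s)) = (fun s : ℂ => y 2 ^ 2 / 2 + y 2 * Complex.exp s + y 2 * Complex.exp (y 1 - s) + y 0 * y 2) from
    funext fun s => by simp [G3f, Function.update]]
  have h := (((Complex.hasDerivAt_exp (y 3)).const_mul (y 2)).const_add (y 2 ^ 2 / 2)).add ((((hasDerivAt_id (y 3)).const_sub (y 1)).cexp).const_mul (y 2)) |>.add_const (y 0 * y 2)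
  simp only [id_eq] at h
  erw [h.deriv]
  simp only [h33]
  ring

lemma key2 (y : Fin 4 → ℂ) (hy : y 2 ∈ slitPlane) (b e : Fin 4) : pd b (Gd e) y = Hd b e y := by
  fin_cases b <;> fin_cases e <;> simp only [Gd, Hd] <;>
    first
      | exact pdG0_0 y | exact pdG0_1 y | exact pdG0_2 y | exact pdG0_3 y
      | exact pdG1_0 y | exact pdG1_1 y | exact pdG1_2 y | exact pdG1_3 y
      | exact pdG2_0 y | exact pdG2_1 y | exact pdG2_2 y hy | exact pdG2_3 y
      | exact pdG3_0 y | exact pdG3_1 y | exact pdG3_2 y | exact pdG3_3 y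
lemma pdH11_0 (y : Fin 4 → ℂ) : pd 0 h11 y = z4 y := by
  unfold pd
  rw [show (fun s => h11 (Function.update y 0 s)) = (fun _ : ℂ => Complex.exp (y 1) - y 2 * Complex.exp (y 1 - y 3)) from
    funext fun s => by simp [h11, Function.update]]
  simp [z4]

lemma pdH11_1 (y : Fin 4 → ℂ) : pd 1 h11 y = t111 y := by
  unfold pd
  rw [show (fun s => h11 (Function.update y 1 s)) = (fun s : ℂ => Complex.exp s - y 2 * Complex.exp (s - y 3)) from
    funext fun s => by simp [h11, Function.update]]
  have h := (Complex.hasDerivAt_exp (y 1)).sub ((((hasDerivAt_id (y 1)).sub_const (y 3)).cexp).const_mul (y 2))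
  simp only [id_eq] at h
  erw [h.deriv]
  simp only [t111, h11]
  try ring

lemma pdH11_2 (y : Fin 4 → ℂ) : pd 2 h11 y = t112 y := by
  unfold pd
  rw [show (fun s => h11 (Function.update y 2 s)) = (fun s : ℂ => Complex.exp (y 1) - s * Complex.exp (y 1 - y 3)) from
    funext fun s => by simp [h11, Function.update]]
  have h := ((hasDerivAt_id (y 2)).mul_const (Complex.exp (y 1 - y 3))).const_sub (Complex.exp (y 1))
  simp only [id_eq] at h
  rw [h.deriv]
  simp only [t112, h12]
  try ring

lemma pdH11_3 (y : Fin 4 → ℂ) : pd 3 h11 y = t113 y := by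
  unfold pd
  rw [show (fun s => h11 (Function.update y 3 s)) = (fun s : ℂ => Complex.exp (y 1) - y 2 * Complex.exp (y 1 - s)) from
    funext fun s => by simp [h11, Function.update]]
  have h := ((((hasDerivAt_id (y 3)).const_sub (y 1)).cexp).const_mul (y 2)).const_sub (Complex.exp (y 1))
  simp only [id_eq] at h
  rw [h.deriv]
  simp only [t113, h13]
  try ring

lemma pdH12_0 (y : Fin 4 → ℂ) : pd 0 h12 y = z4 y := by
  unfold pd
  rw [show (fun s => h12 (Function.update y 0 s)) = (fun _ : ℂ => -Complex.exp (y 1 - y 3)) from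
    funext fun s => by simp [h12, Function.update]]
  simp [z4]

lemma pdH12_1 (y : Fin 4 → ℂ) : pd 1 h12 y = t112 y := by
  unfold pd
  rw [show (fun s => h12 (Function.update y 1 s)) = (fun s : ℂ => -Complex.exp (s - y 3)) from
    funext fun s => by simp [h12, Function.update]]
  have h := (((hasDerivAt_id (y 1)).sub_const (y 3)).cexp).neg
  simp only [id_eq] at h
  erw [h.deriv]
  simp only [t112, h12]
  try ring

lemma pdH12_2 (y : Fin 4 → ℂ) : pd 2 h12 y = z4 y := by
  unfold pd
  rw [show (fun s => h12 (Function.update y 2 s)) = (fun _ : ℂ => -Complex.exp (y 1 - y 3)) from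
    funext fun s => by simp [h12, Function.update]]
  simp [z4]

lemma pdH12_3 (y : Fin 4 → ℂ) : pd 3 h12 y = t123 y := by
  unfold pd
  rw [show (fun s => h12 (Function.update y 3 s)) = (fun s : ℂ => -Complex.exp (y 1 - s)) from
    funext fun s => by simp [h12, Function.update]]
  have h := (((hasDerivAt_id (y 3)).const_sub (y 1)).cexp).neg
  simp only [id_eq] at h
  erw [h.deriv]
  simp only [t123]
  try ring

lemma pdH13_0 (y : Fin 4 → ℂ) : pd 0 h13 y = z4 y := by
  unfold pd
  rw [show (fun s => h13 (Function.update y 0 s)) = (fun _ : ℂ => y 2 * Complex.exp (y 1 - y 3)) from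
    funext fun s => by simp [h13, Function.update]]
  simp [z4]

lemma pdH13_1 (y : Fin 4 → ℂ) : pd 1 h13 y = t113 y := by
  unfold pd
  rw [show (fun s => h13 (Function.update y 1 s)) = (fun s : ℂ => y 2 * Complex.exp (s - y 3)) from
    funext fun s => by simp [h13, Function.update]]
  have h := (((hasDerivAt_id (y 1)).sub_const (y 3)).cexp).const_mul (y 2)
  simp only [id_eq] at h
  rw [h.deriv]
  simp only [t113, h13]
  try ring

lemma pdH13_2 (y : Fin 4 → ℂ) : pd 2 h13 y = t123 y := by
  unfold pd
  rw [show (fun s => h13 (Function.update y 2 s)) = (fun s : ℂ => s * Complex.exp (y 1 - y 3)) from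
    funext fun s => by simp [h13, Function.update]]
  have h := (hasDerivAt_id (y 2)).mul_const (Complex.exp (y 1 - y 3))
  simp only [id_eq] at h
  rw [h.deriv]
  simp only [t123]
  try ring

lemma pdH13_3 (y : Fin 4 → ℂ) : pd 3 h13 y = t133 y := by
  unfold pd
  rw [show (fun s => h13 (Function.update y 3 s)) = (fun s : ℂ => y 2 * Complex.exp (y 1 - s)) from
    funext fun s => by simp [h13, Function.update]]
  have h := (((hasDerivAt_id (y 3)).const_sub (y 1)).cexp).const_mul (y 2)
  simp only [id_eq] at h
  rw [h.deriv]
  simp only [t133]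
  try ring

lemma pdH22_0 (y : Fin 4 → ℂ) : pd 0 h22 y = z4 y := by
  unfold pd
  rw [show (fun s => h22 (Function.update y 0 s)) = (fun _ : ℂ => Complex.log (y 2) + 3 / 2 + y 3) from
    funext fun s => by simp [h22, Function.update]]
  simp [z4]

lemma pdH22_1 (y : Fin 4 → ℂ) : pd 1 h22 y = z4 y := by
  unfold pd
  rw [show (fun s => h22 (Function.update y 1 s)) = (fun _ : ℂ => Complex.log (y 2) + 3 / 2 + y 3) from
    funext fun s => by simp [h22, Function.update]]
  simp [z4]

lemma pdH22_2 (y : Fin 4 → ℂ) (hy : y 2 ∈ slitPlane) : pd 2 h22 y = t222 y := by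
  unfold pd
  rw [show (fun s => h22 (Function.update y 2 s)) = (fun s : ℂ => Complex.log s + 3 / 2 + y 3) from
    funext fun s => by simp [h22, Function.update]]
  have h := ((Complex.hasDerivAt_log hy).add_const ((3 : ℂ) / 2)).add_const (y 3)
  rw [h.deriv]
  simp only [t222]
  try field_simp [Complex.slitPlane_ne_zero hy]
  try ring

lemma pdH22_3 (y : Fin 4 → ℂ) : pd 3 h22 y = o4 y := by
  unfold pd
  rw [show (fun s => h22 (Function.update y 3 s)) = (fun s : ℂ => Complex.log (y 2) + 3 / 2 + s) from
    funext fun s => by simp [h22, Function.update]]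
  have h := (hasDerivAt_id (y 3)).const_add (Complex.log (y 2) + 3 / 2)
  simp only [id_eq] at h
  rw [h.deriv]
  simp only [o4]
  try ring

lemma pdH23_0 (y : Fin 4 → ℂ) : pd 0 h23 y = o4 y := by
  unfold pd
  rw [show (fun s => h23 (Function.update y 0 s)) = (fun s : ℂ => s + y 2 + Complex.exp (y 3) + Complex.exp (y 1 - y 3)) from
    funext fun s => by simp [h23, Function.update]]
  have h := (((hasDerivAt_id (y 0)).add_const (y 2)).add_const (Complex.exp (y 3))).add_const (Complex.exp (y 1 - y 3))
  simp only [id_eq] at h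
  rw [h.deriv]
  simp only [o4]
  try ring

lemma pdH23_1 (y : Fin 4 → ℂ) : pd 1 h23 y = t123 y := by
  unfold pd
  rw [show (fun s => h23 (Function.update y 1 s)) = (fun s : ℂ => y 0 + y 2 + Complex.exp (y 3) + Complex.exp (s - y 3)) from
    funext fun s => by simp [h23, Function.update]]
  have h := (((hasDerivAt_id (y 1)).sub_const (y 3)).cexp).const_add (y 0 + y 2 + Complex.exp (y 3))
  simp only [id_eq] at h
  rw [h.deriv]
  simp only [t123]
  try ring

lemma pdH23_2 (y : Fin 4 → ℂ) : pd 2 h23 y = o4 y := by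
  unfold pd
  rw [show (fun s => h23 (Function.update y 2 s)) = (fun s : ℂ => y 0 + s + Complex.exp (y 3) + Complex.exp (y 1 - y 3)) from
    funext fun s => by simp [h23, Function.update]]
  have h := (((hasDerivAt_id (y 2)).const_add (y 0)).add_const (Complex.exp (y 3))).add_const (Complex.exp (y 1 - y 3))
  simp only [id_eq] at h
  rw [h.deriv]
  simp only [o4]
  try ring

lemma pdH23_3 (y : Fin 4 → ℂ) : pd 3 h23 y = t233 y := by
  unfold pd
  rw [show (fun s => h23 (Function.update y 3 s)) = (fun s : ℂ => y 0 + y 2 + Complex.exp s + Complex.exp (y 1 - s)) from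
    funext fun s => by simp [h23, Function.update]]
  have h := ((Complex.hasDerivAt_exp (y 3)).const_add (y 0 + y 2)).add (((hasDerivAt_id (y 3)).const_sub (y 1)).cexp)
  simp only [id_eq] at h
  erw [h.deriv]
  simp only [t233]
  try ring

lemma pdH33_0 (y : Fin 4 → ℂ) : pd 0 h33 y = z4 y := by
  unfold pd
  rw [show (fun s => h33 (Function.update y 0 s)) = (fun _ : ℂ => y 2 * Complex.exp (y 3) - y 2 * Complex.exp (y 1 - y 3)) from
    funext fun s => by simp [h33, Function.update]]
  simp [z4]

lemma pdH33_1 (y : Fin 4 → ℂ) : pd 1 h33 y = t133 y := by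
  unfold pd
  rw [show (fun s => h33 (Function.update y 1 s)) = (fun s : ℂ => y 2 * Complex.exp (y 3) - y 2 * Complex.exp (s - y 3)) from
    funext fun s => by simp [h33, Function.update]]
  have h := ((((hasDerivAt_id (y 1)).sub_const (y 3)).cexp).const_mul (y 2)).const_sub (y 2 * Complex.exp (y 3))
  simp only [id_eq] at h
  rw [h.deriv]
  simp only [t133]
  try ring

lemma pdH33_2 (y : Fin 4 → ℂ) : pd 2 h33 y = t233 y := by
  unfold pd
  rw [show (fun s => h33 (Function.update y 2 s)) = (fun s : ℂ => s * Complex.exp (y 3) - s * Complex.exp (y 1 - y 3)) from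
    funext fun s => by simp [h33, Function.update]]
  have h := ((hasDerivAt_id (y 2)).mul_const (Complex.exp (y 3))).sub ((hasDerivAt_id (y 2)).mul_const (Complex.exp (y 1 - y 3)))
  simp only [id_eq] at h
  erw [h.deriv]
  simp only [t233]
  try ring

lemma pdH33_3 (y : Fin 4 → ℂ) : pd 3 h33 y = t333 y := by
  unfold pd
  rw [show (fun s => h33 (Function.update y 3 s)) = (fun s : ℂ => y 2 * Complex.exp s - y 2 * Complex.exp (y 1 - s)) from
    funext fun s => by simp [h33, Function.update]]
  have h := ((Complex.hasDerivAt_exp (y 3)).const_mul (y 2)).sub ((((hasDerivAt_id (y 3)).const_sub (y 1)).cexp).const_mul (y 2))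
  simp only [id_eq] at h
  erw [h.deriv]
  simp only [t333]
  try ring

lemma pdP00 (y : Fin 4 → ℂ) : pd 0 (P 0) y = o4 y := by
  simp [pd_P, z4, o4]

lemma pdP01 (y : Fin 4 → ℂ) : pd 0 (P 1) y = z4 y := by
  simp [pd_P, z4, o4]

lemma pdP02 (y : Fin 4 → ℂ) : pd 0 (P 2) y = z4 y := by
  simp [pd_P, z4, o4]

lemma pdP03 (y : Fin 4 → ℂ) : pd 0 (P 3) y = z4 y := by
  simp [pd_P, z4, o4]

lemma pdP10 (y : Fin 4 → ℂ) : pd 1 (P 0) y = z4 y := by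
  simp [pd_P, z4, o4]

lemma pdP11 (y : Fin 4 → ℂ) : pd 1 (P 1) y = o4 y := by
  simp [pd_P, z4, o4]

lemma pdP12 (y : Fin 4 → ℂ) : pd 1 (P 2) y = z4 y := by
  simp [pd_P, z4, o4]

lemma pdP13 (y : Fin 4 → ℂ) : pd 1 (P 3) y = z4 y := by
  simp [pd_P, z4, o4]

lemma pdP20 (y : Fin 4 → ℂ) : pd 2 (P 0) y = z4 y := by
  simp [pd_P, z4, o4]

lemma pdP21 (y : Fin 4 → ℂ) : pd 2 (P 1) y = z4 y := by
  simp [pd_P, z4, o4]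

lemma pdP22 (y : Fin 4 → ℂ) : pd 2 (P 2) y = o4 y := by
  simp [pd_P, z4, o4]

lemma pdP23 (y : Fin 4 → ℂ) : pd 2 (P 3) y = z4 y := by
  simp [pd_P, z4, o4]

lemma pdP30 (y : Fin 4 → ℂ) : pd 3 (P 0) y = z4 y := by
  simp [pd_P, z4, o4]

lemma pdP31 (y : Fin 4 → ℂ) : pd 3 (P 1) y = z4 y := by
  simp [pd_P, z4, o4]

lemma pdP32 (y : Fin 4 → ℂ) : pd 3 (P 2) y = z4 y := by
  simp [pd_P, z4, o4]

lemma pdP33 (y : Fin 4 → ℂ) : pd 3 (P 3) y = o4 y := by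
  simp [pd_P, z4, o4]

set_option maxHeartbeats 1600000 in
lemma key3 (y : Fin 4 → ℂ) (hy : y 2 ∈ slitPlane) (a b e : Fin 4) :
    pd a (Hd b e) y = Td a b e y := by
  fin_cases a <;> fin_cases b <;> fin_cases e
  · exact pdP01 y
  · exact pdP00 y
  · exact pdP03 y
  · exact pdP02 y
  · exact pdP00 y
  · exact pdH11_0 y
  · exact pdH12_0 y
  · exact pdH13_0 y
  · exact pdP03 y
  · exact pdH12_0 y
  · exact pdH22_0 y
  · exact pdH23_0 y
  · exact pdP02 y
  · exact pdH13_0 y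
  · exact pdH23_0 y
  · exact pdH33_0 y
  · exact pdP11 y
  · exact pdP10 y
  · exact pdP13 y
  · exact pdP12 y
  · exact pdP10 y
  · exact pdH11_1 y
  · exact pdH12_1 y
  · exact pdH13_1 y
  · exact pdP13 y
  · exact pdH12_1 y
  · exact pdH22_1 y
  · exact pdH23_1 y
  · exact pdP12 y
  · exact pdH13_1 y
  · exact pdH23_1 y
  · exact pdH33_1 y
  · exact pdP21 y
  · exact pdP20 y
  · exact pdP23 y
  · exact pdP22 y
  · exact pdP20 y
  · exact pdH11_2 y
  · exact pdH12_2 y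
  · exact pdH13_2 y
  · exact pdP23 y
  · exact pdH12_2 y
  · exact pdH22_2 y hy
  · exact pdH23_2 y
  · exact pdP22 y
  · exact pdH13_2 y
  · exact pdH23_2 y
  · exact pdH33_2 y
  · exact pdP31 y
  · exact pdP30 y
  · exact pdP33 y
  · exact pdP32 y
  · exact pdP30 y
  · exact pdH11_3 y
  · exact pdH12_3 y
  · exact pdH13_3 y
  · exact pdP33 y
  · exact pdH12_3 y
  · exact pdH22_3 y
  · exact pdH23_3 y
  · exact pdP32 y
  · exact pdH13_3 y
  · exact pdH23_3 y
  · exact pdH33_3 y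
lemma TdE000 : Td 0 0 0 = z4 := rfl
lemma TdE001 : Td 0 0 1 = o4 := rfl
lemma TdE002 : Td 0 0 2 = z4 := rfl
lemma TdE003 : Td 0 0 3 = z4 := rfl
lemma TdE010 : Td 0 1 0 = o4 := rfl
lemma TdE011 : Td 0 1 1 = z4 := rfl
lemma TdE012 : Td 0 1 2 = z4 := rfl
lemma TdE013 : Td 0 1 3 = z4 := rfl
lemma TdE020 : Td 0 2 0 = z4 := rfl
lemma TdE021 : Td 0 2 1 = z4 := rfl
lemma TdE022 : Td 0 2 2 = z4 := rfl
lemma TdE023 : Td 0 2 3 = o4 := rfl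
lemma TdE030 : Td 0 3 0 = z4 := rfl
lemma TdE031 : Td 0 3 1 = z4 := rfl
lemma TdE032 : Td 0 3 2 = o4 := rfl
lemma TdE033 : Td 0 3 3 = z4 := rfl
lemma TdE100 : Td 1 0 0 = o4 := rfl
lemma TdE101 : Td 1 0 1 = z4 := rfl
lemma TdE102 : Td 1 0 2 = z4 := rfl
lemma TdE103 : Td 1 0 3 = z4 := rfl
lemma TdE110 : Td 1 1 0 = z4 := rfl
lemma TdE111 : Td 1 1 1 = t111 := rfl
lemma TdE112 : Td 1 1 2 = t112 := rfl
lemma TdE113 : Td 1 1 3 = t113 := rfl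
lemma TdE120 : Td 1 2 0 = z4 := rfl
lemma TdE121 : Td 1 2 1 = t112 := rfl
lemma TdE122 : Td 1 2 2 = z4 := rfl
lemma TdE123 : Td 1 2 3 = t123 := rfl
lemma TdE130 : Td 1 3 0 = z4 := rfl
lemma TdE131 : Td 1 3 1 = t113 := rfl
lemma TdE132 : Td 1 3 2 = t123 := rfl
lemma TdE133 : Td 1 3 3 = t133 := rfl
lemma TdE200 : Td 2 0 0 = z4 := rfl
lemma TdE201 : Td 2 0 1 = z4 := rfl
lemma TdE202 : Td 2 0 2 = z4 := rfl
lemma TdE203 : Td 2 0 3 = o4 := rfl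
lemma TdE210 : Td 2 1 0 = z4 := rfl
lemma TdE211 : Td 2 1 1 = t112 := rfl
lemma TdE212 : Td 2 1 2 = z4 := rfl
lemma TdE213 : Td 2 1 3 = t123 := rfl
lemma TdE220 : Td 2 2 0 = z4 := rfl
lemma TdE221 : Td 2 2 1 = z4 := rfl
lemma TdE222 : Td 2 2 2 = t222 := rfl
lemma TdE223 : Td 2 2 3 = o4 := rfl
lemma TdE230 : Td 2 3 0 = o4 := rfl
lemma TdE231 : Td 2 3 1 = t123 := rfl
lemma TdE232 : Td 2 3 2 = o4 := rfl
lemma TdE233 : Td 2 3 3 = t233 := rfl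
lemma TdE300 : Td 3 0 0 = z4 := rfl
lemma TdE301 : Td 3 0 1 = z4 := rfl
lemma TdE302 : Td 3 0 2 = o4 := rfl
lemma TdE303 : Td 3 0 3 = z4 := rfl
lemma TdE310 : Td 3 1 0 = z4 := rfl
lemma TdE311 : Td 3 1 1 = t113 := rfl
lemma TdE312 : Td 3 1 2 = t123 := rfl
lemma TdE313 : Td 3 1 3 = t133 := rfl
lemma TdE320 : Td 3 2 0 = o4 := rfl
lemma TdE321 : Td 3 2 1 = t123 := rfl
lemma TdE322 : Td 3 2 2 = o4 := rfl
lemma TdE323 : Td 3 2 3 = t233 := rfl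
lemma TdE330 : Td 3 3 0 = z4 := rfl
lemma TdE331 : Td 3 3 1 = t133 := rfl
lemma TdE332 : Td 3 3 2 = t233 := rfl
lemma TdE333 : Td 3 3 3 = t333 := rfl
lemma etaE00 : etaMat 0 0 = 0 := rfl
lemma etaE01 : etaMat 0 1 = 1 := rfl
lemma etaE02 : etaMat 0 2 = 0 := rfl
lemma etaE03 : etaMat 0 3 = 0 := rfl
lemma etaE10 : etaMat 1 0 = 1 := rfl
lemma etaE11 : etaMat 1 1 = 0 := rfl
lemma etaE12 : etaMat 1 2 = 0 := rfl
lemma etaE13 : etaMat 1 3 = 0 := rfl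
lemma etaE20 : etaMat 2 0 = 0 := rfl
lemma etaE21 : etaMat 2 1 = 0 := rfl
lemma etaE22 : etaMat 2 2 = 0 := rfl
lemma etaE23 : etaMat 2 3 = 1 := rfl
lemma etaE30 : etaMat 3 0 = 0 := rfl
lemma etaE31 : etaMat 3 1 = 0 := rfl
lemma etaE32 : etaMat 3 2 = 1 := rfl
lemma etaE33 : etaMat 3 3 = 0 := rfl

lemma keyAll (x : Fin 4 → ℂ) (hx : x 2 ∈ Complex.slitPlane) (a b e : Fin 4) :
    pd a (pd b (pd e Fpre)) x = Td a b e x := by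
  have h1 : ∀ y, y 2 ∈ Complex.slitPlane → pd b (pd e Fpre) y = Hd b e y := by
    intro y hy
    rw [pd_congr b (fun z hz => key1 z hz e) hy]
    exact key2 y hy b e
  rw [pd_congr a h1 hx]
  exact key3 x hx a b e

set_option maxHeartbeats 8000000 in
/-- (i) `∂_{t₁}` is a unity: the metric `η_{ab} = ∂_{t₁}∂_a∂_b 𝓕`
(equivalently the structure constants `c_{t₁ab}`) is the constant matrix with
`η_{t₁t₂} = 1`, `η_{αβ} = 1` and all other independent entries zero; and (ii) `𝓕`
satisfies the WDVV associativity equations with respect to `η`. -/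
theorem prepotential_QH_P1_one_pole_WDVV :
    (∀ a b : Fin 4, ∀ x : Fin 4 → ℂ, x 2 ∈ Complex.slitPlane →
      pd 0 (pd a (pd b Fpre)) x = etaMat a b) ∧
    (∀ a b c d : Fin 4, ∀ x : Fin 4 → ℂ, x 2 ∈ Complex.slitPlane →
      ∑ e : Fin 4, ∑ f : Fin 4,
          pd a (pd b (pd e Fpre)) x * (etaMat⁻¹ e f) * pd f (pd c (pd d Fpre)) x =
        ∑ e : Fin 4, ∑ f : Fin 4,
          pd a (pd d (pd e Fpre)) x * (etaMat⁻¹ e f) * pd f (pd c (pd b Fpre)) x) := by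
  constructor
  · intro a b x hx
    rw [keyAll x hx 0 a b]
    fin_cases a <;> fin_cases b <;> rfl
  · intro a b c d x hx
    have K : ∀ a b e : Fin 4, pd a (pd b (pd e Fpre)) x = Td a b e x :=
      fun a b e => keyAll x hx a b e
    have hA : (x 2) ≠ 0 := Complex.slitPlane_ne_zero hx
    have hE : Complex.exp (x 1) = Complex.exp (x 1 - x 3) * Complex.exp (x 3) := by
      rw [← Complex.exp_add]; ring_nf
    simp only [K, etaInv, Fin.sum_univ_four]
    fin_cases a <;> fin_cases b <;> fin_cases c <;> fin_cases d
    all_goals try rfl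
    all_goals simp only [Fin.zero_eta, Fin.mk_one, Fin.reduceFinMk, mul_zero, zero_mul, mul_one, one_mul, add_zero, zero_add, TdE000, TdE001, TdE002, TdE003, TdE010, TdE011, TdE012, TdE013, TdE020, TdE021, TdE022, TdE023, TdE030, TdE031, TdE032, TdE033, TdE100, TdE101, TdE102, TdE103, TdE110, TdE111, TdE112, TdE113, TdE120, TdE121, TdE122, TdE123, TdE130, TdE131, TdE132, TdE133, TdE200, TdE201, TdE202, TdE203, TdE210, TdE211, TdE212, TdE213, TdE220, TdE221, TdE222, TdE223, TdE230, TdE231, TdE232, TdE233, TdE300, TdE301, TdE302, TdE303, TdE310, TdE311, TdE312, TdE313, TdE320, TdE321, TdE322, TdE323, TdE330, TdE331, TdE332, TdE333, etaE00, etaE01, etaE02, etaE03, etaE10, etaE11, etaE12, etaE13, etaE20, etaE21, etaE22, etaE23, etaE30, etaE31, etaE32, etaE33, z4, o4, t111, h11, t112, h12, t113, h13,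
      t123, t133, t222, t233, t333]
    all_goals try simp only [hE]
    all_goals try ring
    all_goals field_simp [hA]
    all_goals ring
end

section
/- Let $\mathscr{F}(t_1,t_2,\alpha,\beta)$ be as in the previous statement and let $E = t_1\partial_{t_1} + 2\partial_{t_2} + \partial_\beta + \alpha\partial_\alpha$. Then $E(\mathscr{F}) = 2\mathscr{F} + q(t_1,t_2,\alpha,\beta)$ where $q$ is a polynomial of degree at most $2$; i.e. $\mathscr{F}$ is quasi-homogeneous of degree $2$ with respect to $E$ up to quadratic terms. -/
open Complex

lemma pd0' (x : Fin 4 → ℂ) : pd 0 Fpre x = x 0 * x 1 + x 2 * x 3 := by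
  have h1 : HasDerivAt (fun s : ℂ => s ^ 2 * x 1 / 2) (x 0 * x 1) (x 0) := by
    have := ((hasDerivAt_pow 2 (x 0)).mul_const (x 1)).div_const 2
    refine this.congr_deriv ?_; ring
  have h2 : HasDerivAt (fun s : ℂ => s * x 2 * x 3) (x 2 * x 3) (x 0) := by
    simpa [mul_assoc] using (hasDerivAt_id (x 0)).mul_const (x 2 * x 3)
  have h := (((((h1.add_const (Complex.exp (x 1))).add_const
      (x 2 ^ 2 * Complex.log (x 2) / 2)).add_const (x 2 ^ 2 * x 3 / 2)).add_const
      (x 2 * Complex.exp (x 3))).sub_const (x 2 * Complex.exp (x 1 - x 3))).add h2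
  have he : (fun s : ℂ => Fpre (Function.update x 0 s)) = fun s : ℂ =>
      s ^ 2 * x 1 / 2 + Complex.exp (x 1) + x 2 ^ 2 * Complex.log (x 2) / 2 +
      x 2 ^ 2 * x 3 / 2 + x 2 * Complex.exp (x 3) - x 2 * Complex.exp (x 1 - x 3) +
      s * x 2 * x 3 := by
    funext s; simp [Fpre, Function.update]
  rw [pd, he]; exact h.deriv

lemma pd1' (x : Fin 4 → ℂ) :
    pd 1 Fpre x = x 0 ^ 2 / 2 + Complex.exp (x 1) - x 2 * Complex.exp (x 1 - x 3) := by
  have ha : HasDerivAt (fun s : ℂ => x 0 ^ 2 * s / 2) (x 0 ^ 2 / 2) (x 1) := by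
    have := ((hasDerivAt_id (x 1)).const_mul (x 0 ^ 2)).div_const 2
    simpa using this
  have hb : HasDerivAt (fun s : ℂ => Complex.exp s) (Complex.exp (x 1)) (x 1) :=
    Complex.hasDerivAt_exp (x 1)
  have hc : HasDerivAt (fun s : ℂ => x 2 * Complex.exp (s - x 3))
      (x 2 * Complex.exp (x 1 - x 3)) (x 1) := by
    have := (((hasDerivAt_id (x 1)).sub_const (x 3)).cexp).const_mul (x 2)
    simpa using this
  have h := (((((ha.add hb).add_const (x 2 ^ 2 * Complex.log (x 2) / 2)).add_const
      (x 2 ^ 2 * x 3 / 2)).add_const (x 2 * Complex.exp (x 3))).sub hc).add_const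
      (x 0 * x 2 * x 3)
  have he : (fun s : ℂ => Fpre (Function.update x 1 s)) = fun s : ℂ =>
      x 0 ^ 2 * s / 2 + Complex.exp s + x 2 ^ 2 * Complex.log (x 2) / 2 +
      x 2 ^ 2 * x 3 / 2 + x 2 * Complex.exp (x 3) - x 2 * Complex.exp (s - x 3) +
      x 0 * x 2 * x 3 := by
    funext s; simp [Fpre, Function.update]
  rw [pd, he]; exact h.deriv

lemma pd2' (x : Fin 4 → ℂ) (hx : x 2 ∈ Complex.slitPlane) :
    pd 2 Fpre x = x 2 * Complex.log (x 2) + x 2 / 2 + x 2 * x 3 + Complex.exp (x 3)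
      - Complex.exp (x 1 - x 3) + x 0 * x 3 := by
  have hne : x 2 ≠ 0 := Complex.slitPlane_ne_zero hx
  have ha : HasDerivAt (fun s : ℂ => s ^ 2 * Complex.log s / 2)
      (x 2 * Complex.log (x 2) + x 2 / 2) (x 2) := by
    have := ((hasDerivAt_pow 2 (x 2)).mul (Complex.hasDerivAt_log hx)).div_const 2
    refine this.congr_deriv ?_
    field_simp
    ring
  have hb : HasDerivAt (fun s : ℂ => s ^ 2 * x 3 / 2) (x 2 * x 3) (x 2) := by
    have := ((hasDerivAt_pow 2 (x 2)).mul_const (x 3)).div_const 2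
    refine this.congr_deriv ?_; ring
  have hc : HasDerivAt (fun s : ℂ => s * Complex.exp (x 3)) (Complex.exp (x 3)) (x 2) := by
    simpa using (hasDerivAt_id (x 2)).mul_const (Complex.exp (x 3))
  have hd : HasDerivAt (fun s : ℂ => s * Complex.exp (x 1 - x 3))
      (Complex.exp (x 1 - x 3)) (x 2) := by
    simpa using (hasDerivAt_id (x 2)).mul_const (Complex.exp (x 1 - x 3))
  have hee : HasDerivAt (fun s : ℂ => x 0 * s * x 3) (x 0 * x 3) (x 2) := by
    have := (hasDerivAt_id (x 2)).const_mul (x 0 * x 3)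
    convert (by simpa using this : HasDerivAt (fun s : ℂ => x 0 * x 3 * s) (x 0 * x 3) (x 2))
      using 2 with s
    ring
  have h := (((((ha.const_add (x 0 ^ 2 * x 1 / 2 + Complex.exp (x 1))).add hb).add hc).sub
      hd).add hee)
  have he : (fun s : ℂ => Fpre (Function.update x 2 s)) = fun s : ℂ =>
      x 0 ^ 2 * x 1 / 2 + Complex.exp (x 1) + s ^ 2 * Complex.log s / 2 +
      s ^ 2 * x 3 / 2 + s * Complex.exp (x 3) - s * Complex.exp (x 1 - x 3) +
      x 0 * s * x 3 := by
    funext s; simp [Fpre, Function.update]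
  rw [pd, he]; exact h.deriv

lemma pd3' (x : Fin 4 → ℂ) :
    pd 3 Fpre x = x 2 ^ 2 / 2 + x 2 * Complex.exp (x 3) + x 2 * Complex.exp (x 1 - x 3)
      + x 0 * x 2 := by
  have hb : HasDerivAt (fun s : ℂ => x 2 ^ 2 * s / 2) (x 2 ^ 2 / 2) (x 3) := by
    have := ((hasDerivAt_id (x 3)).const_mul (x 2 ^ 2)).div_const 2
    simpa using this
  have hc : HasDerivAt (fun s : ℂ => x 2 * Complex.exp s) (x 2 * Complex.exp (x 3)) (x 3) :=
    (Complex.hasDerivAt_exp (x 3)).const_mul (x 2)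
  have hd : HasDerivAt (fun s : ℂ => x 2 * Complex.exp (x 1 - s))
      (-(x 2 * Complex.exp (x 1 - x 3))) (x 3) := by
    have := (((hasDerivAt_id (x 3)).const_sub (x 1)).cexp).const_mul (x 2)
    refine this.congr_deriv ?_
    simp
  have hee : HasDerivAt (fun s : ℂ => x 0 * x 2 * s) (x 0 * x 2) (x 3) := by
    simpa using (hasDerivAt_id (x 3)).const_mul (x 0 * x 2)
  have h := ((((hb.const_add
      (x 0 ^ 2 * x 1 / 2 + Complex.exp (x 1) + x 2 ^ 2 * Complex.log (x 2) / 2)).add hc).sub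
      hd).add hee)
  have he : (fun s : ℂ => Fpre (Function.update x 3 s)) = fun s : ℂ =>
      x 0 ^ 2 * x 1 / 2 + Complex.exp (x 1) + x 2 ^ 2 * Complex.log (x 2) / 2 +
      x 2 ^ 2 * s / 2 + x 2 * Complex.exp s - x 2 * Complex.exp (x 1 - s) +
      x 0 * x 2 * s := by
    funext s; simp [Fpre, Function.update]
  rw [pd, he]; refine h.deriv.trans ?_
  ring

/-- with the Euler field `E = t₁∂_{t₁} + 2∂_{t₂} + ∂_β + α∂_α`, the
prepotential satisfies `E(𝓕) = 2𝓕 + q` with `q` a polynomial of degree at most `2`: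
`𝓕` is quasi-homogeneous of degree `2` up to quadratic terms. -/
theorem prepotential_quasi_homogeneous :
    ∃ q : MvPolynomial (Fin 4) ℂ, q.totalDegree ≤ 2 ∧
      ∀ x : Fin 4 → ℂ, x 2 ∈ Complex.slitPlane →
        x 0 * pd 0 Fpre x + 2 * pd 1 Fpre x + x 2 * pd 2 Fpre x + pd 3 Fpre x =
          2 * Fpre x + MvPolynomial.eval x q := by
  refine ⟨MvPolynomial.X 0 ^ 2 + MvPolynomial.X 2 ^ 2 + MvPolynomial.X 0 * MvPolynomial.X 2,
    ?_, ?_⟩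
  · refine le_trans (MvPolynomial.totalDegree_add _ _) (max_le
      (le_trans (MvPolynomial.totalDegree_add _ _) (max_le ?_ ?_)) ?_)
    · simp [MvPolynomial.totalDegree_X_pow]
    · simp [MvPolynomial.totalDegree_X_pow]
    · exact le_trans (MvPolynomial.totalDegree_mul _ _) (by
        simp [MvPolynomial.totalDegree_X])
  · intro x hx
    rw [pd0' x, pd1' x, pd2' x hx, pd3' x, Fpre]
    simp only [MvPolynomial.eval_add, MvPolynomial.eval_mul, MvPolynomial.eval_pow,
      MvPolynomial.eval_X]
    ring
end
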